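/- arXiv:2102.10279 — 3 statements merged into one kernel-verified Lean document; each statement's English description precedes it below -/
import Mathlib

section
/- The quadratic form d²Φ_β(X)[H] = (det X)^β ( trace((X^{-1}H)²) − β·trace²(X^{-1}H) ) is positive definite on the space of symmetric matrices H, for every symmetric positive-definite X and every real β < 1/n. -/
/-!
Write `X⁻¹ = S * S` with `S` symmetric. By cyclicity of the trace the form becomes
`tr (A²) - β (tr A)²` for the symmetric matrix `A = S H S`, which is nonzero with `H`.
Now `tr (A²)` is the sum of squares of all entries of `A`, hence at least `∑ Aᵢᵢ²`, which by
Cauchy–Schwarz is at least `(tr A)² / n`; so the form is positive for `β < 1 / n`.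
-/

open Matrix

namespace Matrix

variable {ι : Type*} [Fintype ι]

theorem IsSymm.trace_mul_self_eq_sum_sq {A : Matrix ι ι ℝ} (hA : A.IsSymm) :
    (A * A).trace = ∑ i, ∑ j, A i j ^ 2 := by
  simp only [trace, diag, mul_apply, hA.apply, sq]

theorem IsSymm.trace_mul_self_pos {A : Matrix ι ι ℝ} (hA : A.IsSymm) (hA0 : A ≠ 0) :
    0 < (A * A).trace := by
  have hAt : Aᴴ = A := isHermitian_iff_isSymm.mpr hA
  have hnonneg := (posSemidef_conjTranspose_mul_self A).trace_nonneg
  have hne := (trace_conjTranspose_mul_self_eq_zero_iff (A := A)).not.mpr hA0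
  rw [hAt] at hnonneg hne
  exact hnonneg.lt_of_ne' hne

theorem IsSymm.trace_sq_le_card_mul_trace_mul_self {A : Matrix ι ι ℝ} (hA : A.IsSymm) :
    A.trace ^ 2 ≤ Fintype.card ι * (A * A).trace := by
  have hdiag : ∑ i, A i i ^ 2 ≤ (A * A).trace := by
    rw [hA.trace_mul_self_eq_sum_sq]
    exact Finset.sum_le_sum fun i _ ↦
      Finset.single_le_sum (f := fun j ↦ A i j ^ 2) (fun j _ ↦ sq_nonneg _) (Finset.mem_univ i)
  calc A.trace ^ 2 ≤ Fintype.card ι * ∑ i, A i i ^ 2 := sq_sum_le_card_mul_sum_sq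
    _ ≤ Fintype.card ι * (A * A).trace := by gcongr

theorem IsSymm.mul_trace_sq_lt_trace_mul_self {A : Matrix ι ι ℝ} (hA : A.IsSymm) (hA0 : A ≠ 0)
    {β : ℝ} (hβ : β < 1 / Fintype.card ι) : β * A.trace ^ 2 < (A * A).trace := by
  have hpos := hA.trace_mul_self_pos hA0
  rcases le_or_gt β 0 with hβ0 | hβ0
  · nlinarith [sq_nonneg A.trace]
  have hcard : (0 : ℝ) < Fintype.card ι := one_div_pos.mp (hβ0.trans hβ)
  calc β * A.trace ^ 2 ≤ β * (Fintype.card ι * (A * A).trace) :=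
        mul_le_mul_of_nonneg_left hA.trace_sq_le_card_mul_trace_mul_self hβ0.le
    _ = β * Fintype.card ι * (A * A).trace := by ring
    _ < (A * A).trace := by
        apply mul_lt_of_lt_one_left hpos
        rwa [lt_div_iff₀ hcard] at hβ

theorem trace_mul_self_mul_mul_self_mul {R : Type*} [CommSemiring R] (S H : Matrix ι ι R) :
    (S * S * H * (S * S) * H).trace = (S * H * S * (S * H * S)).trace := by
  rw [show S * S * H * (S * S) * H = S * (S * H * S * (S * H)) by noncomm_ring,
    trace_mul_comm, show S * H * S * (S * H) * S = S * H * S * (S * H * S) by noncomm_ring]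

theorem trace_mul_self_mul {R : Type*} [CommSemiring R] (S H : Matrix ι ι R) :
    (S * S * H).trace = (S * H * S).trace := by
  rw [mul_assoc, trace_mul_comm, mul_assoc]

open scoped MatrixOrder in
theorem PosSemidef.exists_isSymm_mul_self_eq [DecidableEq ι] {P : Matrix ι ι ℝ} (hP : P.PosSemidef) :
    ∃ S : Matrix ι ι ℝ, S.IsSymm ∧ S * S = P :=
  ⟨CFC.sqrt P, isHermitian_iff_isSymm.mp (CFC.sqrt_nonneg P).posSemidef.isHermitian,
    CFC.sqrt_mul_sqrt_self P hP.nonneg⟩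

end Matrix

theorem hessian_power_potential_posDef {n : ℕ} (X : Matrix (Fin n) (Fin n) ℝ)
    (hX : X.PosDef) (β : ℝ) (hβ : β < 1 / n)
    (H : Matrix (Fin n) (Fin n) ℝ) (hH : H.IsSymm) (hH0 : H ≠ 0) :
    0 < X.det ^ β *
      ((X⁻¹ * H * X⁻¹ * H).trace - β * (X⁻¹ * H).trace ^ 2) := by
  obtain ⟨S, hS, hSS⟩ := hX.inv.posSemidef.exists_isSymm_mul_self_eq
  have hA : (S * H * S).IsSymm := by
    simp only [IsSymm, transpose_mul, hS.eq, hH.eq, mul_assoc]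
  have hA0 : S * H * S ≠ 0 := by
    intro h
    have hXinv : IsUnit X⁻¹ := hX.inv.isUnit
    have : X⁻¹ * H * X⁻¹ = 0 := by
      rw [← hSS, show S * S * H * (S * S) = S * (S * H * S) * S by noncomm_ring, h]
      simp
    exact hH0 <| (hXinv.mul_right_eq_zero).mp <| (hXinv.mul_left_eq_zero).mp this
  rw [← hSS, trace_mul_self_mul_mul_self_mul, trace_mul_self_mul]
  exact mul_pos (Real.rpow_pos_of_pos hX.det_pos β) <| sub_pos.mpr <|
    hA.mul_trace_sq_lt_trace_mul_self hA0 (by simpa using hβ)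
end

section
/- The weighted geometric mean commutes with congruence: (MᵀAM) #_t (MᵀBM) = Mᵀ(A #_t B)M for all symmetric positive-definite A, B, invertible M, and t ∈ [0,1]. -/
/-!
The mean `A #_t B` does not depend on the chosen square-root factor of `A`: whenever
`A = R Rᵀ`, `A #_t B = R (R⁻¹ B R⁻ᵀ)^t Rᵀ`, since `R⁻¹ A^{1/2}` is orthogonal and real powers,
being given by the continuous functional calculus, commute with orthogonal conjugation.
For the congruent pair take the factor `Mᵀ A^{1/2}` of `Mᵀ A M`: the matrix inside the power is
then the same `A^{-1/2} B A^{-1/2}` as for `A` and `B`.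
-/

open Matrix

open Classical in
/-- Real power of a symmetric matrix, via the spectral decomposition:
if `S = U diag(λ) Uᵀ` then `S^t = U diag(λ^t) Uᵀ` (junk value `S` if `S` is not symmetric). -/
noncomputable def mpow {n : ℕ} (S : Matrix (Fin n) (Fin n) ℝ) (t : ℝ) :
    Matrix (Fin n) (Fin n) ℝ :=
  if h : S.IsHermitian then
    (h.eigenvectorUnitary : Matrix (Fin n) (Fin n) ℝ) *
      Matrix.diagonal (fun i => h.eigenvalues i ^ t) *
      star (h.eigenvectorUnitary : Matrix (Fin n) (Fin n) ℝ)
  else S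

/-- The weighted geometric mean `A #_t B = A^{1/2} (A^{-1/2} B A^{-1/2})^t A^{1/2}`. -/
noncomputable def geomMean {n : ℕ} (A B : Matrix (Fin n) (Fin n) ℝ) (t : ℝ) :
    Matrix (Fin n) (Fin n) ℝ :=
  mpow A (1/2) * mpow (mpow A (-(1/2) : ℝ) * B * mpow A (-(1/2) : ℝ)) t * mpow A (1/2)

section mpow

variable {n : ℕ} {S : Matrix (Fin n) (Fin n) ℝ}

lemma mpow_eq_cfc (hS : S.IsHermitian) (t : ℝ) : mpow S t = cfc (fun x : ℝ => x ^ t) S := by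
  rw [hS.cfc_eq, IsHermitian.cfc, Unitary.conjStarAlgAut_apply, mpow, dif_pos hS]
  rfl

lemma isHermitian_mpow (hS : S.IsHermitian) (t : ℝ) : (mpow S t).IsHermitian := by
  rw [mpow_eq_cfc hS]
  exact cfc_predicate _ S

lemma transpose_mpow (hS : S.IsHermitian) (t : ℝ) : (mpow S t)ᵀ = mpow S t := by
  simpa only [conjTranspose_eq_transpose_of_trivial] using (isHermitian_mpow hS t).eq

lemma mpow_zero (hS : S.IsHermitian) : mpow S 0 = 1 := by
  simp only [mpow_eq_cfc hS, Real.rpow_zero]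
  exact cfc_const_one ℝ S hS.isSelfAdjoint

lemma mpow_one (hS : S.IsHermitian) : mpow S 1 = S := by
  simp only [mpow_eq_cfc hS, Real.rpow_one]
  exact cfc_id' ℝ S hS.isSelfAdjoint

lemma mpow_add (hS : S.PosDef) (a b : ℝ) : mpow S (a + b) = mpow S a * mpow S b := by
  have hS' := hS.isHermitian
  rw [mpow_eq_cfc hS', mpow_eq_cfc hS', mpow_eq_cfc hS',
    ← cfc_mul _ _ S (S.finite_spectrum.continuousOn _) (S.finite_spectrum.continuousOn _)]
  refine cfc_congr fun x hx => Real.rpow_add ?_ a b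
  obtain ⟨i, rfl⟩ := hS'.spectrum_real_eq_range_eigenvalues ▸ hx
  exact hS.eigenvalues_pos i

lemma mpow_mul_mpow_neg (hS : S.PosDef) (a : ℝ) : mpow S a * mpow S (-a) = 1 := by
  rw [← mpow_add hS, add_neg_cancel, mpow_zero hS.isHermitian]

lemma mpow_neg_mul_mpow (hS : S.PosDef) (a : ℝ) : mpow S (-a) * mpow S a = 1 := by
  rw [← mpow_add hS, neg_add_cancel, mpow_zero hS.isHermitian]

lemma mpow_half_mul_mpow_half (hS : S.PosDef) : mpow S (1/2) * mpow S (1/2) = S := by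
  rw [← mpow_add hS, add_halves, mpow_one hS.isHermitian]

lemma mpow_conj_of_mul_transpose_eq_one {N : Matrix (Fin n) (Fin n) ℝ} (hN : N * Nᵀ = 1)
    (t : ℝ) : mpow (N * S * Nᵀ) t = N * mpow S t * Nᵀ := by
  have hstar : star N = Nᵀ := by rw [star_eq_conjTranspose, conjTranspose_eq_transpose_of_trivial]
  have hNt : Nᵀ * N = 1 := mul_eq_one_comm.mp hN
  let U : unitary (Matrix (Fin n) (Fin n) ℝ) := ⟨N, mem_unitaryGroup_iff.mpr (hstar ▸ hN)⟩
  by_cases hS : S.IsHermitian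
  · have hNSN : (N * S * Nᵀ).IsHermitian := by
      simpa only [conjTranspose_eq_transpose_of_trivial] using
        isHermitian_mul_mul_conjTranspose N hS
    have := StarAlgHomClass.map_cfc (Unitary.conjStarAlgAut ℝ _ U) (fun x : ℝ => x ^ t) S
      (S.finite_spectrum.continuousOn _)
      ((continuous_const.matrix_mul continuous_id).matrix_mul continuous_const) hS.isSelfAdjoint
    simp only [Unitary.conjStarAlgAut_apply, U, hstar] at this
    rw [mpow_eq_cfc hS, mpow_eq_cfc hNSN, this]
  -- Orthogonal conjugation preserves non-symmetry, so both sides are the junk value.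
  · have hNSN : ¬ (N * S * Nᵀ).IsHermitian := fun h => hS <| by
      have hS_eq : Nᵀ * (N * S * Nᵀ) * N = S := by
        simp only [mul_assoc, hNt, mul_one]
        rw [← mul_assoc, hNt, one_mul]
      simpa only [conjTranspose_eq_transpose_of_trivial, transpose_transpose, hS_eq]
        using isHermitian_mul_mul_conjTranspose Nᵀ h
    rw [mpow, dif_neg hNSN, mpow, dif_neg hS]

lemma geomMean_eq_of_eq_mul_transpose {A R : Matrix (Fin n) (Fin n) ℝ} (hA : A.PosDef)
    (hAR : A = R * Rᵀ) (B : Matrix (Fin n) (Fin n) ℝ) (t : ℝ) :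
    geomMean A B t = R * mpow (R⁻¹ * B * R⁻¹ᵀ) t * Rᵀ := by
  have hR : IsUnit R.det := by
    have hdet := hA.det_pos.ne'
    rw [hAR, det_mul, det_transpose] at hdet
    exact isUnit_iff_ne_zero.mpr (left_ne_zero_of_mul hdet)
  set P := mpow A (1/2)
  set Q := mpow A (-(1/2))
  have hP : Pᵀ = P := transpose_mpow hA.isHermitian _
  set N := R⁻¹ * P
  have hN : N * Nᵀ = 1 := calc
    N * Nᵀ = R⁻¹ * (P * P) * R⁻¹ᵀ := by simp only [N, transpose_mul, hP, mul_assoc]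
    _ = (R⁻¹ * R) * (R⁻¹ * R)ᵀ := by
      rw [mpow_half_mul_mpow_half hA, hAR, transpose_mul]; simp only [mul_assoc]
    _ = 1 := by rw [nonsing_inv_mul R hR, transpose_one, one_mul]
  have hPQ : P * Q = 1 := mpow_mul_mpow_neg hA _
  have hQP : Q * P = 1 := mpow_neg_mul_mpow hA _
  have hmid : R⁻¹ * B * R⁻¹ᵀ = N * (Q * B * Q) * Nᵀ := calc
    R⁻¹ * B * R⁻¹ᵀ = R⁻¹ * (P * Q) * B * (Q * P) * R⁻¹ᵀ := by rw [hPQ, hQP, mul_one, mul_one]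
    _ = N * (Q * B * Q) * Nᵀ := by simp only [N, transpose_mul, hP, mul_assoc]
  rw [hmid, mpow_conj_of_mul_transpose_eq_one hN, geomMean]
  calc P * mpow (Q * B * Q) t * P
      = (R * R⁻¹) * P * mpow (Q * B * Q) t * P * (R * R⁻¹)ᵀ := by
        rw [mul_nonsing_inv R hR, transpose_one, one_mul, mul_one]
    _ = R * (N * mpow (Q * B * Q) t * Nᵀ) * Rᵀ := by
        simp only [N, transpose_mul, hP, mul_assoc]

end mpow

theorem geomMean_congruence_general {n : ℕ} (A B M : Matrix (Fin n) (Fin n) ℝ)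
    (hA : A.PosDef) (hM : IsUnit M.det)
    (t : ℝ) :
    geomMean (Mᵀ * A * M) (Mᵀ * B * M) t = Mᵀ * geomMean A B t * M := by
  set P := mpow A (1/2)
  have hAP : A = P * Pᵀ := by rw [transpose_mpow hA.isHermitian, mpow_half_mul_mpow_half hA]
  have hMAM : (Mᵀ * A * M).PosDef := by
    simpa only [conjTranspose_eq_transpose_of_trivial] using
      hA.conjTranspose_mul_mul_same (mulVec_injective_of_isUnit ((isUnit_iff_isUnit_det M).mpr hM))
  have hMAM_eq : Mᵀ * A * M = (Mᵀ * P) * (Mᵀ * P)ᵀ := by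
    rw [hAP, transpose_mul, transpose_transpose]; simp only [mul_assoc]
  have hMt : IsUnit Mᵀ.det := by rwa [det_transpose]
  have hmid : (Mᵀ * P)⁻¹ * (Mᵀ * B * M) * (Mᵀ * P)⁻¹ᵀ = P⁻¹ * B * P⁻¹ᵀ := by
    rw [Matrix.mul_inv_rev, transpose_mul, transpose_nonsing_inv, transpose_transpose]
    simp only [mul_assoc, nonsing_inv_mul_cancel_left _ _ hMt, mul_nonsing_inv_cancel_left _ _ hM]
  rw [geomMean_eq_of_eq_mul_transpose hMAM hMAM_eq, geomMean_eq_of_eq_mul_transpose hA hAP, hmid,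
    transpose_mul, transpose_transpose]
  simp only [mul_assoc]

theorem geomMean_congruence {n : ℕ} (A B M : Matrix (Fin n) (Fin n) ℝ)
    (hA : A.PosDef) (hB : B.PosDef) (hM : IsUnit M.det)
    (t : ℝ) (ht : t ∈ Set.Icc (0:ℝ) 1) :
    geomMean (Mᵀ * A * M) (Mᵀ * B * M) t = Mᵀ * geomMean A B t * M :=
  geomMean_congruence_general A B M hA hM t
end

section
/- If Q(t) = Mᵀ P(t) M for an invertible matrix M and a smooth curve P in the positive-definite cone, then the β-metric speeds satisfy g^β_{Q(t)}(Q'(t),Q'(t)) = |det M|^{2β} · g^β_{P(t)}(P'(t),P'(t)); consequently the length of Q equals |det M|^β times the length of P. -/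
open Matrix intervalIntegral

attribute [local instance] Matrix.frobeniusNormedAddCommGroup Matrix.frobeniusNormedSpace

/-- The Riemannian metric derived from the β-power potential, at base point `X`,
applied to tangent vectors `A` and `B`. -/
noncomputable def gBeta {n : ℕ} (β : ℝ) (X A B : Matrix (Fin n) (Fin n) ℝ) : ℝ :=
  X.det ^ β *
    ((X⁻¹ * A * X⁻¹ * B).trace - β * (X⁻¹ * A).trace * (X⁻¹ * B).trace)

attribute [local instance] Matrix.frobeniusNormedRing Matrix.frobeniusNormedAlgebra

theorem congruence_speed_and_length {n : ℕ} (β : ℝ)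
    (M : Matrix (Fin n) (Fin n) ℝ) (hM : IsUnit M.det)
    (P : ℝ → Matrix (Fin n) (Fin n) ℝ) (hP : ContDiff ℝ (⊤ : ℕ∞) P)
    (hPpos : ∀ t : ℝ, (P t).PosDef)
    (Q : ℝ → Matrix (Fin n) (Fin n) ℝ) (hQ : Q = fun t => Mᵀ * P t * M) :
    (∀ t : ℝ,
        gBeta β (Q t) (deriv Q t) (deriv Q t) =
          |M.det| ^ (2 * β) * gBeta β (P t) (deriv P t) (deriv P t)) ∧
      (∫ t in (0:ℝ)..1, Real.sqrt (gBeta β (Q t) (deriv Q t) (deriv Q t))) =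
        |M.det| ^ β * ∫ t in (0:ℝ)..1, Real.sqrt (gBeta β (P t) (deriv P t) (deriv P t)) := by
  have hMT : IsUnit (Mᵀ).det := by rwa [Matrix.det_transpose]
  have hdetabs : |M.det| ^ (2 * β) = (M.det ^ 2) ^ β := by
    rw [Real.rpow_mul (abs_nonneg _), Real.rpow_two, sq_abs]
  have h1 : ∀ t : ℝ,
      gBeta β (Q t) (deriv Q t) (deriv Q t) =
        |M.det| ^ (2 * β) * gBeta β (P t) (deriv P t) (deriv P t) := by
    intro t
    have hd : HasDerivAt P (deriv P t) t := ((hP.differentiable (by simp)) t).hasDerivAt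
    have hQd : HasDerivAt Q (Mᵀ * deriv P t * M) t := by
      rw [hQ]; exact (hd.const_mul Mᵀ).mul_const M
    have hderiv : deriv Q t = Mᵀ * deriv P t * M := hQd.deriv
    set X := P t with hX
    set A := deriv P t with hA
    have hXu : IsUnit X.det := ((hPpos t).det_pos.ne').isUnit
    have key : (Mᵀ * X * M)⁻¹ * (Mᵀ * A * M) = M⁻¹ * (X⁻¹ * A) * M := by
      rw [Matrix.mul_inv_rev, Matrix.mul_inv_rev]
      calc M⁻¹ * (X⁻¹ * (Mᵀ)⁻¹) * (Mᵀ * A * M)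
          = M⁻¹ * X⁻¹ * ((Mᵀ)⁻¹ * Mᵀ) * A * M := by
            simp only [Matrix.mul_assoc]
        _ = M⁻¹ * (X⁻¹ * A) * M := by
            rw [Matrix.nonsing_inv_mul _ hMT]
            simp only [Matrix.mul_assoc, Matrix.one_mul]
    have htr : ∀ B : Matrix (Fin n) (Fin n) ℝ, (M⁻¹ * B * M).trace = B.trace := by
      intro B
      rw [Matrix.trace_mul_cycle, Matrix.mul_nonsing_inv _ hM, Matrix.one_mul]
    have hconj : ∀ B C : Matrix (Fin n) (Fin n) ℝ,
        M⁻¹ * B * M * (M⁻¹ * C * M) = M⁻¹ * (B * C) * M := by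
      intro B C
      simp only [Matrix.mul_assoc]
      rw [← Matrix.mul_assoc M M⁻¹, Matrix.mul_nonsing_inv _ hM, Matrix.one_mul]
    have hquad : ((Mᵀ * X * M)⁻¹ * (Mᵀ * A * M) * (Mᵀ * X * M)⁻¹ * (Mᵀ * A * M)).trace
        = (X⁻¹ * A * X⁻¹ * A).trace := by
      rw [Matrix.mul_assoc ((Mᵀ * X * M)⁻¹ * (Mᵀ * A * M)), key, hconj, htr]
      simp only [Matrix.mul_assoc]
    have hdet : (Mᵀ * X * M).det = M.det ^ 2 * X.det := by
      rw [Matrix.det_mul, Matrix.det_mul, Matrix.det_transpose]; ring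
    have hdetr : ((Mᵀ * X * M).det : ℝ) ^ β = (M.det ^ 2) ^ β * X.det ^ β := by
      rw [hdet, Real.mul_rpow (sq_nonneg _) (hPpos t).det_pos.le]
    have hQt : Q t = Mᵀ * X * M := by rw [hQ]
    simp only [hderiv, hQt, gBeta, hdetabs]
    rw [hdetr, hquad, key, htr]
    ring
  refine ⟨h1, ?_⟩
  have hsqrt : Real.sqrt (|M.det| ^ (2 * β)) = |M.det| ^ β := by
    rw [Real.sqrt_eq_rpow, ← Real.rpow_mul (abs_nonneg _)]
    congr 1; ring
  have h2 : ∀ t : ℝ, Real.sqrt (gBeta β (Q t) (deriv Q t) (deriv Q t))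
      = |M.det| ^ β * Real.sqrt (gBeta β (P t) (deriv P t) (deriv P t)) := by
    intro t
    rw [h1 t, Real.sqrt_mul (Real.rpow_nonneg (abs_nonneg _) _), hsqrt]
  simp only [h2]
  exact intervalIntegral.integral_const_mul _ _
end
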